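/- Two locally finite games G and H are equivalent if and only if 𝒢(G) = 𝒢(H), i.e. either both have finite rank with the same Sprague-Grundy value in ℕ, or both have infinite rank with extended values ∞(𝒜) and ∞(ℬ) where 𝒜 = ℬ. -/

import Mathlib

open scoped Classical

universe u

/-- `PosP Γ n` is the set `Pₙ` of positions from which the second player can win
within `n` rounds: `P₀` is the set of terminal positions, and
`Pₙ₊₁ = {x : every option of x has an option in Pₙ}`. -/
def PosP {V : Type*} (Γ : V → Finset V) : ℕ → Set V
  | 0 => {x | Γ x = ∅}
  | n + 1 => {x | ∀ y ∈ Γ x, ∃ z ∈ Γ y, z ∈ PosP Γ n}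

/-- `PosN Γ n` is the set `Nₙ`: for `n ≥ 1`, `Nₙ = {x : some option of x lies in Pₙ₋₁}`. -/
def PosN {V : Type*} (Γ : V → Finset V) : ℕ → Set V
  | 0 => ∅
  | n + 1 => {x | ∃ y ∈ Γ x, y ∈ PosP Γ n}

/-- The P-positions `𝒫 = ⋃ₙ Pₙ` (second player wins). -/
def PPos {V : Type*} (Γ : V → Finset V) : Set V := ⋃ n, PosP Γ n

/-- The N-positions `𝒩 = ⋃ₙ Nₙ` (first player wins). -/
def NPos {V : Type*} (Γ : V → Finset V) : Set V := ⋃ n, PosN Γ n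

/-- The D-positions `𝒟 = V ∖ (𝒫 ∪ 𝒩)` (draws). -/
def DPos {V : Type*} (Γ : V → Finset V) : Set V := (PPos Γ ∪ NPos Γ)ᶜ

/-- The mex (least natural number not attained) of the values `g y`, `y ∈ s`. -/
noncomputable def mexF {V : Type*} (s : Finset V) (g : V → ℕ∞) : ℕ :=
  sInf {n : ℕ | ∀ y ∈ s, g y ≠ (n : ℕ∞)}

/-- The approximants `𝒢ₙ` of the extended Sprague-Grundy function. -/
noncomputable def Gfun {V : Type*} (Γ : V → Finset V) : ℕ → V → ℕ∞
  | 0 => fun x => if Γ x = ∅ then 0 else ⊤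
  | n + 1 => fun x =>
      let m := mexF (Γ x) (Gfun Γ n)
      if ∀ y ∈ Γ x, Gfun Γ n y ≤ (m : ℕ∞) ∨ ∃ z ∈ Γ y, Gfun Γ n z = (m : ℕ∞)
      then (m : ℕ∞) else ⊤

/-- `x` has finite rank with (finite) Sprague-Grundy value `m`:
`𝒢ₙ(x) = m` for all sufficiently large `n`. -/
def HasGVal {V : Type*} (Γ : V → Finset V) (x : V) (m : ℕ) : Prop :=
  ∃ n₀ : ℕ, ∀ n ≥ n₀, Gfun Γ n x = (m : ℕ∞)

/-- `x` has infinite rank: `𝒢ₙ(x) = ∞` for all `n`. -/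
def InfiniteRank {V : Type*} (Γ : V → Finset V) (x : V) : Prop :=
  ∀ n : ℕ, Gfun Γ n x = ⊤

/-- The rank of `x`: the least `n` with `𝒢ₙ(x) < ∞`, or `∞` if there is none. -/
noncomputable def rank {V : Type*} (Γ : V → Finset V) (x : V) : ℕ∞ :=
  sInf ((↑) '' {n : ℕ | Gfun Γ n x ≠ ⊤})

/-- For `x` of infinite rank, the set `𝒜` with `𝒢(x) = ∞(𝒜)`:
the set of finite Sprague-Grundy values of finite-rank options of `x`. -/
def ValSet {V : Type*} (Γ : V → Finset V) (x : V) : Set ℕ :=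
  {a | ∃ y ∈ Γ x, HasGVal Γ y a}

/-- The graph of the disjunctive sum: move in exactly one coordinate. -/
noncomputable def sumGraph {V W : Type*} (Γ : V → Finset V) (Δ : W → Finset W) :
    V × W → Finset (V × W) := fun p =>
  (Γ p.1).image (fun u => (u, p.2)) ∪ (Δ p.2).image (fun w => (p.1, w))

/-- Two (positions of possibly different) games lie in the same outcome class. -/
def SameOutcome {V W : Type*} (Γ : V → Finset V) (x : V) (Δ : W → Finset W) (y : W) : Prop :=
  (x ∈ PPos Γ ↔ y ∈ PPos Δ) ∧ (x ∈ NPos Γ ↔ y ∈ NPos Δ) ∧ (x ∈ DPos Γ ↔ y ∈ DPos Δ)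

/-- Equivalence of games: `G + X` and `H + X` have the same outcome for every
locally finite game `X`. -/
def GameEquiv {V W : Type*} (Γ : V → Finset V) (x : V) (Δ : W → Finset W) (y : W) : Prop :=
  ∀ (X : Type u) (Ξ : X → Finset X) (z : X),
    SameOutcome (sumGraph Γ Ξ) (x, z) (sumGraph Δ Ξ) (y, z)

/-- The nim heap `*m`: positions `0, …, m`, where from `k` one can move to any `j < k`. -/
def nimGraph (m : ℕ) : Fin (m + 1) → Finset (Fin (m + 1)) :=
  fun k => Finset.univ.filter (fun j => j < k)

/-- The reduced graph `R(V)`: the induced graph on the complement of the P-positions. -/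
noncomputable def reducedGraph {V : Type*} (Γ : V → Finset V) :
    {x : V // x ∉ PPos Γ} → Finset {x : V // x ∉ PPos Γ} := fun x =>
  (Γ x.1).subtype (fun y => y ∉ PPos Γ)

/-- The vertex set of `R^{(k)}(V)`: positions which do not have finite rank with
Sprague-Grundy value `< k`. -/
def RkSet {V : Type*} (Γ : V → Finset V) (k : ℕ) : Set V :=
  {x | ¬ ∃ m < k, HasGVal Γ x m}

/-- The induced game graph `R^{(k)}(V)` on `RkSet Γ k`. -/
noncomputable def RkGraph {V : Type*} (Γ : V → Finset V) (k : ℕ) :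
    RkSet Γ k → Finset (RkSet Γ k) := fun x =>
  (Γ x.1).subtype (fun y => y ∈ RkSet Γ k)

/-- `V` is `k`-stable: every infinite-rank position `x`, with `𝒢(x) = ∞(𝒜)`,
has `{0, 1, …, k} ⊆ 𝒜`. -/
def kStable {V : Type*} (Γ : V → Finset V) (k : ℕ) : Prop :=
  ∀ x, InfiniteRank Γ x → ∀ j ≤ k, j ∈ ValSet Γ x

/-- `l` is a directed walk from `o` to `x` in the graph `Γ`. -/
def IsWalk {V : Type*} (Γ : V → Finset V) (o x : V) (l : List V) : Prop :=
  l.head? = some o ∧ l.getLast? = some x ∧ l.Chain' (fun a b => b ∈ Γ a)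

/-- `Γ` is a tree with root `o`: `o` has no incoming arcs, and every vertex is
reached from `o` by a unique directed walk. -/
def IsTree {V : Type*} (Γ : V → Finset V) (o : V) : Prop :=
  (∀ x, o ∉ Γ x) ∧ ∀ x, ∃! l : List V, IsWalk Γ o x l

/-- `f` is a mex labelling: `f x` is the least natural number not attained by `f`
on the options of `x`, for every `x`. -/
def MexLabelling {V : Type*} (Γ : V → Finset V) (f : V → ℕ) : Prop :=
  ∀ x, f x = sInf {n : ℕ | ∀ y ∈ Γ x, f y ≠ n}


/-!
The finite part is the Sprague-Grundy theory with draws: a stage-`n` value `a` of `u`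
and of `v` makes `(u, v)` a P-position of the sum, since every move in one component
either lowers its value, which the opponent copies in the other component, or can be
reversed to value `a` at an earlier stage. A position `u` of infinite rank has an
option `y` of infinite rank, none of whose options has value `m = mex 𝒜`; this is what
the recursion for `𝒢ₙ(u)` failing at every stage means. Moving to `y`, or moving a
finite component to value `m`, keeps the opponent from ever reaching a P-position, so
a sum with an infinite-rank component is never a P-position, and it is an
N-position exactly when one move reaches equal finite values. Hence the outcome of
`G + X` depends only on `𝒢(G)`, and conversely `𝒢(G)` is read off the outcomes of
`G + *a` for the nim heaps `*a`.
-/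

open Filter

section Mex

variable {V : Type*}

lemma mexF_eq_iff {s : Finset V} {g : V → ℕ∞} {a : ℕ} :
    mexF s g = a ↔ (∀ y ∈ s, g y ≠ a) ∧ ∀ t < a, ∃ y ∈ s, g y = t := by
  have hne : {n : ℕ | ∀ y ∈ s, g y ≠ n}.Nonempty := by
    obtain ⟨n, hn⟩ := Infinite.exists_notMem_finset (s.image fun y => (g y).toNat)
    exact ⟨n, fun y hy hgy => hn (Finset.mem_image.2 ⟨y, hy, by simp [hgy]⟩)⟩
  constructor
  · rintro rfl
    refine ⟨Nat.sInf_mem hne, fun t ht => ?_⟩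
    by_contra! h
    exact Nat.notMem_of_lt_sInf ht h
  · rintro ⟨h1, h2⟩
    refine le_antisymm (Nat.sInf_le h1) (not_lt.1 fun hlt => ?_)
    obtain ⟨y, hy, hgy⟩ := h2 _ hlt
    exact Nat.sInf_mem hne y hy hgy

end Mex

section Gfun

variable {V : Type*} {Γ : V → Finset V} {n : ℕ} {x : V} {a : ℕ}

lemma gfun_zero_eq_coe_iff : Gfun Γ 0 x = a ↔ Γ x = ∅ ∧ a = 0 := by
  simp only [Gfun]
  split_ifs with h <;> simp [h, eq_comm]

lemma gfun_succ_eq_coe_iff :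
    Gfun Γ (n + 1) x = a ↔ (∀ y ∈ Γ x, Gfun Γ n y ≠ a) ∧ (∀ t < a, ∃ y ∈ Γ x, Gfun Γ n y = t) ∧
      ∀ y ∈ Γ x, Gfun Γ n y ≤ a ∨ ∃ z ∈ Γ y, Gfun Γ n z = a := by
  rw [← and_assoc, ← mexF_eq_iff]
  simp only [Gfun]
  split_ifs with h
  · rw [Nat.cast_inj]
    exact ⟨fun ha => ⟨ha, ha ▸ h⟩, And.left⟩
  · simp only [ENat.top_ne_natCast, false_iff]
    rintro ⟨rfl, h'⟩
    exact h h'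

lemma gfun_succ_option_lt_or_reverse (h : Gfun Γ (n + 1) x = a) {y : V} (hy : y ∈ Γ x) :
    (∃ b < a, Gfun Γ n y = b) ∨ ∃ z ∈ Γ y, Gfun Γ n z = a := by
  obtain ⟨hne, -, hrev⟩ := gfun_succ_eq_coe_iff.1 h
  refine (hrev y hy).imp_left fun hle => ?_
  obtain ⟨b, hb⟩ := ENat.ne_top_iff_exists.1 (ne_top_of_le_ne_top (ENat.natCast_ne_top a) hle)
  rw [← hb] at hle ⊢
  exact ⟨b, lt_of_le_of_ne (by exact_mod_cast hle) (fun hba => hne y hy (by rw [← hb, hba])), rfl⟩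

lemma gfun_succ_of_ne_top : ∀ {n : ℕ} {x : V}, Gfun Γ n x ≠ ⊤ → Gfun Γ (n + 1) x = Gfun Γ n x
  | 0, x, h => by
    obtain ⟨a, ha⟩ := ENat.ne_top_iff_exists.1 h
    obtain ⟨hx, rfl⟩ := gfun_zero_eq_coe_iff.1 ha.symm
    rw [← ha, gfun_succ_eq_coe_iff]
    simp [hx]
  | n + 1, x, h => by
    obtain ⟨a, ha⟩ := ENat.ne_top_iff_exists.1 h
    obtain ⟨hne, hlt, hrev⟩ := gfun_succ_eq_coe_iff.1 ha.symm
    have hstab : ∀ {y}, Gfun Γ n y ≠ ⊤ → Gfun Γ (n + 1) y = Gfun Γ n y := gfun_succ_of_ne_top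
    rw [← ha, gfun_succ_eq_coe_iff]
    refine ⟨fun y hy hya => ?_, fun t ht => ?_, fun y hy => ?_⟩
    · by_cases hyn : Gfun Γ n y = ⊤
      · -- `y` has an option of value `a` at stage `n`, so `a` is not its mex at stage `n + 1`
        obtain ⟨z, hz, hza⟩ := (hrev y hy).resolve_left (by simp [hyn])
        exact (gfun_succ_eq_coe_iff.1 hya).1 z hz hza
      · exact hne y hy (hstab hyn ▸ hya)
    · obtain ⟨y, hy, hyt⟩ := hlt t ht
      exact ⟨y, hy, (hstab (y := y) (by simp [hyt])).trans hyt⟩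
    · refine (hrev y hy).imp (fun hle => ?_) fun ⟨z, hz, hza⟩ => ⟨z, hz, ?_⟩
      · rwa [hstab (ne_top_of_le_ne_top (ENat.natCast_ne_top a) hle)]
      · rwa [hstab (by simp [hza])]

lemma gfun_eq_of_le {m : ℕ} (h : Gfun Γ n x ≠ ⊤) (hnm : n ≤ m) : Gfun Γ m x = Gfun Γ n x := by
  induction m, hnm using Nat.le_induction with
  | base => rfl
  | succ m _ ih => rw [gfun_succ_of_ne_top (ih ▸ h), ih]

lemma hasGVal_of_gfun_eq (h : Gfun Γ n x = a) : HasGVal Γ x a :=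
  ⟨n, fun _ hm => (gfun_eq_of_le (by simp [h]) hm).trans h⟩

lemma HasGVal.unique {b : ℕ} (ha : HasGVal Γ x a) (hb : HasGVal Γ x b) : a = b := by
  obtain ⟨n, hn⟩ := ha
  obtain ⟨m, hm⟩ := hb
  exact_mod_cast (hn _ (le_max_left n m)).symm.trans (hm _ (le_max_right n m))

lemma HasGVal.hasGVal_iff_eq {b : ℕ} (h : HasGVal Γ x a) : HasGVal Γ x b ↔ b = a :=
  ⟨fun hb => hb.unique h, fun hba => hba ▸ h⟩

lemma HasGVal.exists_mem_hasGVal_of_lt (h : HasGVal Γ x a) {t : ℕ} (ht : t < a) :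
    ∃ y ∈ Γ x, HasGVal Γ y t := by
  obtain ⟨n, hn⟩ := h
  obtain ⟨y, hy, hyt⟩ := (gfun_succ_eq_coe_iff.1 (hn (n + 1) n.le_succ)).2.1 t ht
  exact ⟨y, hy, hasGVal_of_gfun_eq hyt⟩

lemma infiniteRank_iff_forall_not_hasGVal : InfiniteRank Γ x ↔ ∀ a, ¬ HasGVal Γ x a := by
  refine ⟨fun h a ⟨n, hn⟩ => by simpa [h n] using hn n le_rfl, fun h n => ?_⟩
  by_contra hn
  obtain ⟨a, ha⟩ := ENat.ne_top_iff_exists.1 hn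
  exact h a (hasGVal_of_gfun_eq ha.symm)

lemma InfiniteRank.not_hasGVal (h : InfiniteRank Γ x) (a : ℕ) : ¬ HasGVal Γ x a :=
  infiniteRank_iff_forall_not_hasGVal.1 h a

lemma hasGVal_or_infiniteRank (Γ : V → Finset V) (x : V) :
    (∃ a, HasGVal Γ x a) ∨ InfiniteRank Γ x := by
  rw [infiniteRank_iff_forall_not_hasGVal, ← not_exists]
  exact em _

lemma eventually_gfun_eq_of_hasGVal (s : Finset V) :
    ∀ᶠ n in atTop, ∀ y ∈ s, ∀ a : ℕ, HasGVal Γ y a → Gfun Γ n y = a := by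
  rw [eventually_all_finset]
  intro y _
  rcases hasGVal_or_infiniteRank Γ y with ⟨a, ha⟩ | hy
  · obtain ⟨n₀, hn₀⟩ := ha
    exact eventually_atTop.2 ⟨n₀, fun n hn b hb => hb.unique ⟨n₀, hn₀⟩ ▸ hn₀ n hn⟩
  · exact Eventually.of_forall fun _ a ha => absurd ha (hy.not_hasGVal a)

lemma InfiniteRank.exists_witness {u : V} (hu : InfiniteRank Γ u) :
    ∃ m, m ∉ ValSet Γ u ∧ (∀ t < m, t ∈ ValSet Γ u) ∧
      ∃ y ∈ Γ u, InfiniteRank Γ y ∧ ∀ z ∈ Γ y, ¬ HasGVal Γ z m := by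
  obtain ⟨N, hN⟩ := (eventually_gfun_eq_of_hasGVal (Γ u ∪ (Γ u).biUnion Γ)).exists
  have hopt : ∀ y ∈ Γ u, ∀ a : ℕ, Gfun Γ N y = a ↔ HasGVal Γ y a := fun y hy a =>
    ⟨hasGVal_of_gfun_eq, hN y (by simp [hy]) a⟩
  have hopt₂ : ∀ y ∈ Γ u, ∀ z ∈ Γ y, ∀ a : ℕ, HasGVal Γ z a → Gfun Γ N z = a :=
    fun y hy z hz => hN z (Finset.mem_union_right _ (Finset.mem_biUnion.2 ⟨y, hy, hz⟩))
  set m := mexF (Γ u) (Gfun Γ N) with hm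
  obtain ⟨hmex, hlt⟩ := mexF_eq_iff.1 hm.symm
  have hfail : ¬ ∀ y ∈ Γ u, Gfun Γ N y ≤ m ∨ ∃ z ∈ Γ y, Gfun Γ N z = m := fun h =>
    ENat.top_ne_natCast m ((hu (N + 1)).symm.trans (gfun_succ_eq_coe_iff.2 ⟨hmex, hlt, h⟩))
  push Not at hfail
  obtain ⟨y, hy, hym, hyz⟩ := hfail
  refine ⟨m, fun ⟨y, hy, hym⟩ => hmex y hy ((hopt y hy m).2 hym),
    fun t ht => ?_, y, hy, ?_, fun z hz hzm => hyz z hz (hopt₂ y hy z hz m hzm)⟩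
  · obtain ⟨y, hy, hyt⟩ := hlt t ht
    exact ⟨y, hy, (hopt y hy t).1 hyt⟩
  · rw [infiniteRank_iff_forall_not_hasGVal]
    intro b hb
    have hmb : m < b := by rwa [(hopt y hy b).2 hb, Nat.cast_lt] at hym
    obtain ⟨z, hz, hzm⟩ := hb.exists_mem_hasGVal_of_lt hmb
    exact hyz z hz (hopt₂ y hy z hz m hzm)

end Gfun

section Outcome

variable {V W : Type*} {Γ : V → Finset V} {Δ : W → Finset W} {x : V}

lemma mem_posP_zero : x ∈ PosP Γ 0 ↔ Γ x = ∅ := Iff.rfl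

lemma mem_posP_succ {n : ℕ} : x ∈ PosP Γ (n + 1) ↔ ∀ y ∈ Γ x, ∃ z ∈ Γ y, z ∈ PosP Γ n :=
  Iff.rfl

lemma mem_posN_succ {n : ℕ} : x ∈ PosN Γ (n + 1) ↔ ∃ y ∈ Γ x, y ∈ PosP Γ n := Iff.rfl

lemma notMem_posN_of_mem_posP {n k : ℕ} {x : V} (hp : x ∈ PosP Γ n) : x ∉ PosN Γ k := by
  intro hk
  match n, k, hp, hk with
  | 0, k + 1, hp, hk =>
    obtain ⟨y, hy, -⟩ := mem_posN_succ.1 hk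
    simp [mem_posP_zero.1 hp] at hy
  | n + 1, k + 1, hp, hk =>
    obtain ⟨y, hy, hyP⟩ := mem_posN_succ.1 hk
    obtain ⟨z, hz, hzP⟩ := mem_posP_succ.1 hp y hy
    exact notMem_posN_of_mem_posP hyP (mem_posN_succ.2 ⟨z, hz, hzP⟩)
termination_by n + k

lemma notMem_posP_succ_of_mem {y : V} {n : ℕ} (hy : y ∈ Γ x) (h : ∀ z ∈ Γ y, z ∉ PosP Γ n) :
    x ∉ PosP Γ (n + 1) := fun hp =>
  let ⟨z, hz, hzP⟩ := mem_posP_succ.1 hp y hy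
  h z hz hzP

lemma mem_NPos_iff : x ∈ NPos Γ ↔ ∃ y ∈ Γ x, y ∈ PPos Γ := by
  simp only [NPos, PPos, Set.mem_iUnion]
  constructor
  · rintro ⟨_ | n, hn⟩
    · exact hn.elim
    · obtain ⟨y, hy, hyP⟩ := hn
      exact ⟨y, hy, n, hyP⟩
  · rintro ⟨y, hy, n, hyP⟩
    exact ⟨n + 1, y, hy, hyP⟩

lemma notMem_posP_of_mem_NPos (h : x ∈ NPos Γ) (n : ℕ) : x ∉ PosP Γ n := fun hp =>
  let ⟨_, hk⟩ := Set.mem_iUnion.1 h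
  notMem_posN_of_mem_posP hp hk

lemma notMem_PPos_of_mem_NPos (h : x ∈ NPos Γ) : x ∉ PPos Γ := fun hp =>
  let ⟨n, hn⟩ := Set.mem_iUnion.1 hp
  notMem_posP_of_mem_NPos h n hn

lemma sameOutcome_iff {y : W} :
    SameOutcome Γ x Δ y ↔ (x ∈ PPos Γ ↔ y ∈ PPos Δ) ∧ (x ∈ NPos Γ ↔ y ∈ NPos Δ) := by
  simp only [SameOutcome, DPos, Set.mem_compl_iff, Set.mem_union]
  constructor
  · exact fun h => ⟨h.1, h.2.1⟩
  · exact fun ⟨hP, hN⟩ => ⟨hP, hN, by rw [hP, hN]⟩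

section Iso

variable (e : V ≃ W)

lemma map_mem_posP_iff {n : ℕ} (he : ∀ x, Δ (e x) = (Γ x).map e.toEmbedding) :
    e x ∈ PosP Δ n ↔ x ∈ PosP Γ n := by
  induction n generalizing x with
  | zero => simp only [mem_posP_zero, he, Finset.map_eq_empty]
  | succ n ih =>
    simp only [mem_posP_succ, he, Finset.mem_map, Equiv.coe_toEmbedding, forall_exists_index,
      and_imp, forall_apply_eq_imp_iff₂, exists_exists_and_eq_and, ih]

lemma map_mem_NPos_iff (he : ∀ x, Δ (e x) = (Γ x).map e.toEmbedding) :
    e x ∈ NPos Δ ↔ x ∈ NPos Γ := by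
  simp only [mem_NPos_iff, PPos, Set.mem_iUnion, he, Finset.mem_map,
    Equiv.coe_toEmbedding, exists_exists_and_eq_and, map_mem_posP_iff e he]

lemma map_gfun {n : ℕ} (he : ∀ x, Δ (e x) = (Γ x).map e.toEmbedding) :
    Gfun Δ n (e x) = Gfun Γ n x := by
  induction n generalizing x with
  | zero => simp only [Gfun, he, Finset.map_eq_empty]
  | succ n ih =>
    simp only [Gfun, he, mexF, Finset.mem_map, Equiv.coe_toEmbedding, forall_exists_index,
      and_imp, forall_apply_eq_imp_iff₂, exists_exists_and_eq_and, ih]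
    congr

lemma map_hasGVal_iff {a : ℕ} (he : ∀ x, Δ (e x) = (Γ x).map e.toEmbedding) :
    HasGVal Δ (e x) a ↔ HasGVal Γ x a := by
  simp only [HasGVal, map_gfun e he]

end Iso

end Outcome

section Sum

variable {V W : Type*} {Γ : V → Finset V} {Δ : W → Finset W} {u : V} {v : W}

lemma mem_sumGraph {q : V × W} :
    q ∈ sumGraph Γ Δ (u, v) ↔ (∃ u' ∈ Γ u, q = (u', v)) ∨ ∃ v' ∈ Δ v, q = (u, v') := by
  simp only [sumGraph, Finset.mem_union, Finset.mem_image, eq_comm (a := q)]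

lemma mem_sumGraph_left {u' : V} (h : u' ∈ Γ u) : (u', v) ∈ sumGraph Γ Δ (u, v) :=
  mem_sumGraph.2 (.inl ⟨u', h, rfl⟩)

lemma mem_sumGraph_right {v' : W} (h : v' ∈ Δ v) : (u, v') ∈ sumGraph Γ Δ (u, v) :=
  mem_sumGraph.2 (.inr ⟨v', h, rfl⟩)

lemma forall_mem_sumGraph {p : V × W → Prop} :
    (∀ q ∈ sumGraph Γ Δ (u, v), p q) ↔ (∀ u' ∈ Γ u, p (u', v)) ∧ ∀ v' ∈ Δ v, p (u, v') := by
  simp only [sumGraph, Finset.forall_mem_union, Finset.forall_mem_image]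

lemma sumGraph_swap (p : V × W) :
    sumGraph Δ Γ p.swap = (sumGraph Γ Δ p).map (Equiv.prodComm V W).toEmbedding := by
  ext q
  simp only [sumGraph, Prod.fst_swap, Prod.snd_swap, Finset.mem_map, Finset.mem_union,
    Finset.mem_image, Equiv.coe_toEmbedding, Equiv.prodComm_apply]
  aesop

lemma swap_mem_sumGraph {p q : V × W} : q.swap ∈ sumGraph Δ Γ p.swap ↔ q ∈ sumGraph Γ Δ p := by
  rw [sumGraph_swap]
  exact Finset.mem_map' _

lemma swap_mem_posP_sumGraph {p : V × W} {n : ℕ} :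
    p.swap ∈ PosP (sumGraph Δ Γ) n ↔ p ∈ PosP (sumGraph Γ Δ) n :=
  map_mem_posP_iff (Equiv.prodComm V W) sumGraph_swap

lemma swap_mem_NPos_sumGraph {p : V × W} : p.swap ∈ NPos (sumGraph Δ Γ) ↔ p ∈ NPos (sumGraph Γ Δ) :=
  map_mem_NPos_iff (Equiv.prodComm V W) sumGraph_swap

lemma exists_reply_mem_posP_sumGraph {s n n' a : ℕ}
    (ih : ∀ {n n' a : ℕ} {u v}, Gfun Γ n u = a → Gfun Δ n' v = a → n + n' ≤ s →
      (u, v) ∈ PosP (sumGraph Γ Δ) s)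
    (hu : Gfun Γ n u = a) (hv : Gfun Δ n' v = a) (hs : n + n' ≤ s + 1) {u' : V} (hu' : u' ∈ Γ u) :
    ∃ r ∈ sumGraph Γ Δ (u', v), r ∈ PosP (sumGraph Γ Δ) s := by
  obtain ⟨k, rfl⟩ : ∃ k, n = k + 1 := Nat.exists_eq_succ_of_ne_zero fun h0 => by
    subst h0
    simp [(gfun_zero_eq_coe_iff.1 hu).1] at hu'
  rcases gfun_succ_option_lt_or_reverse hu hu' with ⟨b, hba, hb⟩ | ⟨z, hz, hza⟩
  · obtain ⟨k', rfl⟩ : ∃ k', n' = k' + 1 := Nat.exists_eq_succ_of_ne_zero fun h0 => by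
      subst h0
      exact absurd (gfun_zero_eq_coe_iff.1 hv).2 (by omega)
    obtain ⟨v', hv', hv'b⟩ := (gfun_succ_eq_coe_iff.1 hv).2.1 b hba
    exact ⟨(u', v'), mem_sumGraph_right hv', ih hb hv'b (by omega)⟩
  · exact ⟨(z, v), mem_sumGraph_left hz, ih hza hv (by omega)⟩

lemma mem_posP_sumGraph_of_gfun_eq {s n n' a : ℕ} (hu : Gfun Γ n u = a) (hv : Gfun Δ n' v = a)
    (hs : n + n' ≤ s) : (u, v) ∈ PosP (sumGraph Γ Δ) s := by
  induction s generalizing n n' a u v with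
  | zero =>
    obtain ⟨rfl, rfl⟩ : n = 0 ∧ n' = 0 := by omega
    simp [mem_posP_zero, sumGraph, (gfun_zero_eq_coe_iff.1 hu).1, (gfun_zero_eq_coe_iff.1 hv).1]
  | succ s ih =>
    rw [mem_posP_succ, forall_mem_sumGraph]
    refine ⟨fun u' hu' => exists_reply_mem_posP_sumGraph ih hu hv hs hu', fun v' hv' => ?_⟩
    obtain ⟨r, hr, hrP⟩ := exists_reply_mem_posP_sumGraph
      (fun hv hu hs => swap_mem_posP_sumGraph.2 (ih hu hv (by omega))) hv hu (by omega) hv'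
    exact ⟨r.swap, swap_mem_sumGraph.1 (by simpa using hr),
      swap_mem_posP_sumGraph.1 (by simpa using hrP)⟩

lemma mem_PPos_sumGraph_of_hasGVal {a : ℕ} (hu : HasGVal Γ u a) (hv : HasGVal Δ v a) :
    (u, v) ∈ PPos (sumGraph Γ Δ) := by
  obtain ⟨n, hn⟩ := hu
  obtain ⟨n', hn'⟩ := hv
  exact Set.mem_iUnion.2 ⟨n + n', mem_posP_sumGraph_of_gfun_eq (hn n le_rfl) (hn' n' le_rfl) le_rfl⟩

lemma mem_NPos_sumGraph_of_hasGVal_ne {a b : ℕ} (hu : HasGVal Γ u a) (hv : HasGVal Δ v b)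
    (hab : a ≠ b) : (u, v) ∈ NPos (sumGraph Γ Δ) := by
  rw [mem_NPos_iff]
  rcases hab.lt_or_gt with hab | hba
  · obtain ⟨v', hv', hv'a⟩ := hv.exists_mem_hasGVal_of_lt hab
    exact ⟨_, mem_sumGraph_right hv', mem_PPos_sumGraph_of_hasGVal hu hv'a⟩
  · obtain ⟨u', hu', hu'b⟩ := hu.exists_mem_hasGVal_of_lt hba
    exact ⟨_, mem_sumGraph_left hu', mem_PPos_sumGraph_of_hasGVal hu'b hv⟩

lemma notMem_posP_succ_sumGraph_of_infiniteRank_left {n : ℕ}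
    (ih : ∀ {u v}, InfiniteRank Γ u ∨ InfiniteRank Δ v → (u, v) ∉ PosP (sumGraph Γ Δ) n)
    (hu : InfiniteRank Γ u) : (u, v) ∉ PosP (sumGraph Γ Δ) (n + 1) := by
  have hreply : ∀ {u' v'}, (∀ a, HasGVal Γ u' a → ¬ HasGVal Δ v' a) →
      (u', v') ∉ PosP (sumGraph Γ Δ) n := by
    intro u' v' h
    rcases hasGVal_or_infiniteRank Γ u' with ⟨a, ha⟩ | hu'
    · rcases hasGVal_or_infiniteRank Δ v' with ⟨b, hb⟩ | hv'
      · exact notMem_posP_of_mem_NPos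
          (mem_NPos_sumGraph_of_hasGVal_ne ha hb (by rintro rfl; exact h a ha hb)) n
      · exact ih (.inr hv')
    · exact ih (.inl hu')
  obtain ⟨m, hmA, hltA, y, hy, hyinf, hyz⟩ := hu.exists_witness
  rcases hasGVal_or_infiniteRank Δ v with ⟨b, hb⟩ | hv
  · by_cases hbA : b ∈ ValSet Γ u
    · obtain ⟨u₀, hu₀, hu₀b⟩ := hbA
      exact notMem_posP_of_mem_NPos (mem_NPos_iff.2
        ⟨_, mem_sumGraph_left hu₀, mem_PPos_sumGraph_of_hasGVal hu₀b hb⟩) _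
    rcases lt_trichotomy b m with hbm | rfl | hmb
    · exact absurd (hltA b hbm) hbA
    · exact notMem_posP_succ_of_mem (mem_sumGraph_left hy) (forall_mem_sumGraph.2
        ⟨fun z hz => hreply fun a hza hva => hyz z hz (hva.unique hb ▸ hza),
          fun _ _ => ih (.inl hyinf)⟩)
    · obtain ⟨v', hv', hv'm⟩ := hb.exists_mem_hasGVal_of_lt hmb
      exact notMem_posP_succ_of_mem (mem_sumGraph_right hv') (forall_mem_sumGraph.2
        ⟨fun u' hu' => hreply fun a hua hva => hmA ⟨u', hu', hva.unique hv'm ▸ hua⟩,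
          fun _ _ => ih (.inl hu)⟩)
  · exact notMem_posP_succ_of_mem (mem_sumGraph_left hy)
      (forall_mem_sumGraph.2 ⟨fun _ _ => ih (.inr hv), fun _ _ => ih (.inl hyinf)⟩)

lemma InfiniteRank.nonempty (hu : InfiniteRank Γ u) : (Γ u).Nonempty := by
  rw [Finset.nonempty_iff_ne_empty]
  intro h
  simpa using (hu 0).symm.trans (gfun_zero_eq_coe_iff.2 ⟨h, rfl⟩)

lemma notMem_posP_sumGraph_of_infiniteRank {n : ℕ} (h : InfiniteRank Γ u ∨ InfiniteRank Δ v) :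
    (u, v) ∉ PosP (sumGraph Γ Δ) n := by
  induction n generalizing u v with
  | zero =>
    intro hp
    obtain ⟨q, hq⟩ : (sumGraph Γ Δ (u, v)).Nonempty := by
      rcases h with hu | hv
      · exact hu.nonempty.image _ |>.mono Finset.subset_union_left
      · exact hv.nonempty.image _ |>.mono Finset.subset_union_right
    simp [mem_posP_zero.1 hp] at hq
  | succ n ih =>
    rcases h with hu | hv
    · exact notMem_posP_succ_sumGraph_of_infiniteRank_left ih hu
    · rw [← swap_mem_posP_sumGraph]
      exact notMem_posP_succ_sumGraph_of_infiniteRank_left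
        (fun h => swap_mem_posP_sumGraph.not.2 (ih h.symm)) hv

lemma mem_PPos_sumGraph_iff :
    (u, v) ∈ PPos (sumGraph Γ Δ) ↔ ∃ a, HasGVal Γ u a ∧ HasGVal Δ v a := by
  refine ⟨fun hp => ?_, fun ⟨a, hu, hv⟩ => mem_PPos_sumGraph_of_hasGVal hu hv⟩
  obtain ⟨n, hn⟩ := Set.mem_iUnion.1 hp
  rcases hasGVal_or_infiniteRank Γ u with ⟨a, ha⟩ | hu
  · rcases hasGVal_or_infiniteRank Δ v with ⟨b, hb⟩ | hv
    · obtain rfl : a = b := by_contra fun hab =>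
        notMem_PPos_of_mem_NPos (mem_NPos_sumGraph_of_hasGVal_ne ha hb hab) hp
      exact ⟨a, ha, hb⟩
    · exact absurd hn (notMem_posP_sumGraph_of_infiniteRank (.inr hv))
  · exact absurd hn (notMem_posP_sumGraph_of_infiniteRank (.inl hu))

lemma mem_NPos_sumGraph_iff_of_infiniteRank_left (hu : InfiniteRank Γ u) :
    (u, v) ∈ NPos (sumGraph Γ Δ) ↔ ∃ b ∈ ValSet Γ u, HasGVal Δ v b := by
  rw [mem_NPos_iff]
  constructor
  · rintro ⟨q, hq, hqP⟩
    rcases mem_sumGraph.1 hq with ⟨u', hu', rfl⟩ | ⟨v', -, rfl⟩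
    · obtain ⟨b, hu'b, hvb⟩ := mem_PPos_sumGraph_iff.1 hqP
      exact ⟨b, ⟨u', hu', hu'b⟩, hvb⟩
    · obtain ⟨b, hub, -⟩ := mem_PPos_sumGraph_iff.1 hqP
      exact absurd hub (hu.not_hasGVal b)
  · rintro ⟨b, ⟨u₀, hu₀, hu₀b⟩, hvb⟩
    exact ⟨_, mem_sumGraph_left hu₀, mem_PPos_sumGraph_of_hasGVal hu₀b hvb⟩

lemma mem_NPos_sumGraph_iff_of_infiniteRank_right (hv : InfiniteRank Δ v) :
    (u, v) ∈ NPos (sumGraph Γ Δ) ↔ ∃ a ∈ ValSet Δ v, HasGVal Γ u a := by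
  rw [← swap_mem_NPos_sumGraph]
  exact mem_NPos_sumGraph_iff_of_infiniteRank_left hv

lemma mem_NPos_sumGraph_iff_of_hasGVal_left {a : ℕ} (hu : HasGVal Γ u a) :
    (u, v) ∈ NPos (sumGraph Γ Δ) ↔
      (∃ b, HasGVal Δ v b ∧ b ≠ a) ∨ (InfiniteRank Δ v ∧ a ∈ ValSet Δ v) := by
  rcases hasGVal_or_infiniteRank Δ v with ⟨b, hb⟩ | hv
  · have hv : ¬ InfiniteRank Δ v := fun hv => hv.not_hasGVal b hb
    simp only [hb.hasGVal_iff_eq, exists_eq_left, hv, false_and, or_false]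
    exact ⟨fun hN hba => notMem_PPos_of_mem_NPos hN (mem_PPos_sumGraph_of_hasGVal hu (hba ▸ hb)),
      fun hba => mem_NPos_sumGraph_of_hasGVal_ne hu hb (Ne.symm hba)⟩
  · simp only [mem_NPos_sumGraph_iff_of_infiniteRank_right hv, hu.hasGVal_iff_eq,
      exists_eq_right, hv.not_hasGVal, false_and, exists_false, hv, true_and, false_or]

end Sum

lemma gfun_nimGraph {m n : ℕ} {k : Fin (m + 1)} (hk : (k : ℕ) ≤ n) :
    Gfun (nimGraph m) n k = (k : ℕ) := by
  have hmem : ∀ {j k : Fin (m + 1)}, j ∈ nimGraph m k ↔ j < k := by simp [nimGraph]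
  induction n generalizing k with
  | zero =>
    rw [gfun_zero_eq_coe_iff, Finset.eq_empty_iff_forall_notMem]
    exact ⟨fun j hj => by have := hmem.1 hj; omega, by omega⟩
  | succ n ih =>
    rw [gfun_succ_eq_coe_iff]
    refine ⟨fun j hj => ?_, fun t ht => ?_, fun j hj => .inl ?_⟩
    · have hjk := hmem.1 hj
      rw [ih (by omega), Ne, Nat.cast_inj]
      omega
    · exact ⟨⟨t, by omega⟩, hmem.2 ht, ih (by simp; omega)⟩
    · have hjk := hmem.1 hj
      rw [ih (by omega), Nat.cast_le]
      omega

/-- `Γ` transported to `ULift V`, so that nim heaps serve as test games in every universe. -/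
def liftGraph {V : Type*} (Γ : V → Finset V) : ULift.{u} V → Finset (ULift.{u} V) :=
  fun x => (Γ x.down).map Equiv.ulift.symm.toEmbedding

lemma hasGVal_liftGraph_iff {V : Type*} {Γ : V → Finset V} {x : V} {a : ℕ} :
    HasGVal (liftGraph.{u} Γ) ⟨x⟩ a ↔ HasGVal Γ x a :=
  map_hasGVal_iff (Δ := liftGraph Γ) Equiv.ulift.symm fun _ => rfl

lemma hasGVal_liftGraph_nimGraph (m : ℕ) :
    HasGVal (liftGraph.{u} (nimGraph m)) ⟨Fin.last m⟩ m :=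
  hasGVal_liftGraph_iff.2 <| hasGVal_of_gfun_eq (n := m) <| by
    simpa only [Fin.val_last] using gfun_nimGraph (k := Fin.last m) (by simp)

/-- two locally finite games are equivalent iff they have the same
extended Sprague-Grundy value: either both of finite rank with the same value
`m ∈ ℕ`, or both of infinite rank with the same set `𝒜`. -/
theorem stmt6 {V W : Type*} (Γ : V → Finset V) (Δ : W → Finset W) (x : V) (y : W) :
    GameEquiv Γ x Δ y ↔
      ((∃ m : ℕ, HasGVal Γ x m ∧ HasGVal Δ y m) ∨
        (InfiniteRank Γ x ∧ InfiniteRank Δ y ∧ ValSet Γ x = ValSet Δ y)) := by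
  constructor
  · intro h
    have hnim (a : ℕ) := sameOutcome_iff.1 (h _ (liftGraph (nimGraph a)) ⟨Fin.last a⟩)
    have hval (a : ℕ) : HasGVal Γ x a ↔ HasGVal Δ y a := by
      simpa only [mem_PPos_sumGraph_iff, (hasGVal_liftGraph_nimGraph a).hasGVal_iff_eq,
        exists_eq_right] using (hnim a).1
    rcases hasGVal_or_infiniteRank Γ x with ⟨m, hm⟩ | hx
    · exact .inl ⟨m, hm, (hval m).1 hm⟩
    have hy : InfiniteRank Δ y :=
      infiniteRank_iff_forall_not_hasGVal.2 fun a => (hval a).not.1 (hx.not_hasGVal a)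
    refine .inr ⟨hx, hy, Set.ext fun a => ?_⟩
    simpa only [mem_NPos_sumGraph_iff_of_infiniteRank_left hx,
      mem_NPos_sumGraph_iff_of_infiniteRank_left hy,
      (hasGVal_liftGraph_nimGraph a).hasGVal_iff_eq, exists_eq_right] using (hnim a).2
  · rintro (⟨m, hxm, hym⟩ | ⟨hx, hy, hxy⟩) X Ξ z <;> refine sameOutcome_iff.2 ⟨?_, ?_⟩
    · simp only [mem_PPos_sumGraph_iff, hxm.hasGVal_iff_eq, hym.hasGVal_iff_eq]
    · rw [mem_NPos_sumGraph_iff_of_hasGVal_left hxm, mem_NPos_sumGraph_iff_of_hasGVal_left hym]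
    · simp only [mem_PPos_sumGraph_iff, hx.not_hasGVal, hy.not_hasGVal, false_and, exists_false]
    · rw [mem_NPos_sumGraph_iff_of_infiniteRank_left hx,
        mem_NPos_sumGraph_iff_of_infiniteRank_left hy, hxy]
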